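/- Let γ ∈ (0,1], σ > 0, α ∈ [0,1/2) and λ₁ > 0. There exists a constant C > 0, depending only on γ, σ and λ₁, with the following property. Let z ∈ [0, λ₁] and let w : ℤ³ → (ℝ³ → ℂ) be a family of three-times continuously differentiable functions such that G := ∑_{j=0}^{3} ∑_{k ∈ ℤ³} ∫_{ℝ³} exp(2z⟨k,η⟩^γ)·‖D^j w_k(η)‖²·⟨k,η⟩^{2σ} dη < ∞, where D^j w_k(η) denotes the j-th iterated Fréchet derivative of w_k at η (with its operator norm). Then sup_{k ∈ ℤ³} sup_{η ∈ ℝ³} exp(z⟨k,η⟩^γ)·⟨k,η⟩^σ·|w_k(η)| ≤ C·G^{1/2}; in particular, for every t ≥ 0, sup_{k ∈ ℤ³, k ≠ 0} exp(z⟨k,kt⟩^γ)·⟨k,kt⟩^σ·|k|^{−α}·|w_k(kt)| ≤ C·G^{1/2}. -/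

import Mathlib

/-- Euclidean norm of a lattice point `k ∈ ℤ³`, viewed as a vector of `ℝ³`. -/
noncomputable def knorm (k : Fin 3 → ℤ) : ℝ := Real.sqrt (∑ i, ((k i : ℝ)) ^ 2)

/-- Japanese bracket `⟨k, η⟩ = √(1 + |k|² + |η|²)` for `k ∈ ℤ³`, `η ∈ ℝ³`. -/
noncomputable def jbe (k : Fin 3 → ℤ) (η : EuclideanSpace ℝ (Fin 3)) : ℝ :=
  Real.sqrt (1 + (∑ i, ((k i : ℝ)) ^ 2) + ‖η‖ ^ 2)

/-- The vector `kt = t·k ∈ ℝ³`. -/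
noncomputable def ktv (k : Fin 3 → ℤ) (t : ℝ) : EuclideanSpace ℝ (Fin 3) :=
  (WithLp.equiv 2 (Fin 3 → ℝ)).symm (fun i => t * (k i : ℝ))

/-!
The pointwise bound is a Sobolev embedding `H³ ⊂ L^∞` localized to unit cubes, on which the
weight is essentially constant. Along a unit segment `‖v 0‖ ≤ ‖v t‖ + ∫₀¹ ‖v'‖`; squaring, Jensen and
averaging over `t` give `‖v 0‖² ≤ 2 ∫₀¹ (‖v‖² + ‖v'‖²)`. Applied to `t ↦ D^j u (y + t e)`, whose
derivative is bounded by `‖D^(j+1) u‖`, successively in the three coordinate directions, this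
bounds `‖u x‖²` by `4³ ∫_{x + [0,1]³} ∑_{j ≤ 3} ‖D^j u‖²`. On that cube `⟨k, ·⟩` moves by at most
`√3 ≤ 2`, being 1-Lipschitz, so by subadditivity of `s ↦ s ^ γ` for `γ ≤ 1` the weight
`exp (z ⟨k, η⟩ ^ γ) ⟨k, η⟩ ^ σ` changes by a factor at most `e^(2z) 3^σ`, and the weighted cube
integral is bounded by the `k`-th term of `G`. The second claim is the first one at `η = kt`,
since `|k| ^ (-α) ≤ 1` for `k ≠ 0`.
-/

open MeasureTheory Set

section Sobolev

variable {F : Type*} [NormedAddCommGroup F] [NormedSpace ℝ F]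

lemma sq_integral_le_integral_sq_Icc {f : ℝ → ℝ} (hf : Continuous f) :
    (∫ t in Icc (0:ℝ) 1, f t) ^ 2 ≤ ∫ t in Icc (0:ℝ) 1, f t ^ 2 := by
  have : IsProbabilityMeasure (volume.restrict (Icc (0:ℝ) 1)) :=
    ⟨by simp [Real.volume_Icc]⟩
  exact (Even.convexOn_pow even_two).map_integral_le (continuous_pow 2).continuousOn
    isClosed_univ (by simp) hf.integrableOn_Icc (hf.pow 2).integrableOn_Icc

lemma norm_le_norm_add_integral_norm_deriv [CompleteSpace F] {v : ℝ → F} (hv : ContDiff ℝ 1 v)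
    {t : ℝ} (ht : t ∈ Icc (0:ℝ) 1) :
    ‖v 0‖ ≤ ‖v t‖ + ∫ s in Icc (0:ℝ) 1, ‖deriv v s‖ := by
  have hdc : Continuous (deriv v) := hv.continuous_deriv le_rfl
  have hFTC : ∫ s in (0:ℝ)..t, deriv v s = v t - v 0 :=
    intervalIntegral.integral_deriv_eq_sub
      (fun x _ => hv.differentiable one_ne_zero x) (hdc.intervalIntegrable _ _)
  calc ‖v 0‖ ≤ ‖v t‖ + ‖v t - v 0‖ := by
        simpa [norm_sub_rev] using norm_le_norm_add_norm_sub' (v 0) (v t)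
    _ ≤ ‖v t‖ + ∫ s in (0:ℝ)..t, ‖deriv v s‖ := by
        rw [← hFTC]; gcongr; exact intervalIntegral.norm_integral_le_integral_norm ht.1
    _ ≤ ‖v t‖ + ∫ s in Icc (0:ℝ) 1, ‖deriv v s‖ := by
        rw [intervalIntegral.integral_of_le ht.1]
        gcongr ‖v t‖ + ?_
        exact setIntegral_mono_set hdc.norm.integrableOn_Icc
          (Filter.Eventually.of_forall fun _ => norm_nonneg _)
          (Ioc_subset_Icc_self.trans (Icc_subset_Icc_right ht.2)).eventuallyLE

lemma sq_norm_le_two_mul_integral_Icc [CompleteSpace F] {v : ℝ → F} (hv : ContDiff ℝ 1 v) :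
    ‖v 0‖ ^ 2 ≤ 2 * ∫ t in Icc (0:ℝ) 1, (‖v t‖ ^ 2 + ‖deriv v t‖ ^ 2) := by
  have hvc : Continuous v := hv.continuous
  have hdc : Continuous (deriv v) := hv.continuous_deriv le_rfl
  set D := ∫ s in Icc (0:ℝ) 1, ‖deriv v s‖
  have hD2 : D ^ 2 ≤ ∫ s in Icc (0:ℝ) 1, ‖deriv v s‖ ^ 2 :=
    sq_integral_le_integral_sq_Icc hdc.norm
  have hint : ∀ {g : ℝ → ℝ}, Continuous g → IntegrableOn g (Icc (0:ℝ) 1) :=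
    fun hg => hg.integrableOn_Icc
  calc ‖v 0‖ ^ 2 = ∫ _ in Icc (0:ℝ) 1, ‖v 0‖ ^ 2 := by simp
    _ ≤ ∫ t in Icc (0:ℝ) 1, (2 * ‖v t‖ ^ 2 + 2 * D ^ 2) := by
        refine setIntegral_mono_on (hint continuous_const) (hint (by fun_prop))
          measurableSet_Icc fun t ht => ?_
        nlinarith [norm_le_norm_add_integral_norm_deriv hv ht, norm_nonneg (v 0),
          sq_nonneg (‖v t‖ - D)]
    _ = 2 * (∫ t in Icc (0:ℝ) 1, ‖v t‖ ^ 2) + 2 * D ^ 2 := by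
        rw [integral_add (hint (by fun_prop)) (hint continuous_const), integral_const_mul]
        simp
    _ ≤ 2 * ∫ t in Icc (0:ℝ) 1, (‖v t‖ ^ 2 + ‖deriv v t‖ ^ 2) := by
        rw [integral_add (hint (by fun_prop)) (hint (by fun_prop))]
        linarith

lemma ofReal_sq_norm_le_two_mul_lintegral_Icc [CompleteSpace F] {v : ℝ → F}
    (hv : ContDiff ℝ 1 v) :
    ENNReal.ofReal (‖v 0‖ ^ 2) ≤
      2 * ∫⁻ t in Icc (0:ℝ) 1, (ENNReal.ofReal (‖v t‖ ^ 2) + ENNReal.ofReal (‖deriv v t‖ ^ 2)) := by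
  have hint : IntegrableOn (fun t => ‖v t‖ ^ 2 + ‖deriv v t‖ ^ 2) (Icc (0:ℝ) 1) :=
    (hv.continuous.norm.pow 2 |>.add ((hv.continuous_deriv le_rfl).norm.pow 2)).integrableOn_Icc
  calc ENNReal.ofReal (‖v 0‖ ^ 2)
      ≤ ENNReal.ofReal (2 * ∫ t in Icc (0:ℝ) 1, (‖v t‖ ^ 2 + ‖deriv v t‖ ^ 2)) :=
        ENNReal.ofReal_le_ofReal (sq_norm_le_two_mul_integral_Icc hv)
    _ = 2 * ∫⁻ t in Icc (0:ℝ) 1,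
          (ENNReal.ofReal (‖v t‖ ^ 2) + ENNReal.ofReal (‖deriv v t‖ ^ 2)) := by
        rw [ENNReal.ofReal_mul zero_le_two, ENNReal.ofReal_ofNat,
          ofReal_integral_eq_lintegral_ofReal hint (.of_forall fun _ => by positivity)]
        simp only [ENNReal.ofReal_add (sq_nonneg _) (sq_nonneg _)]

variable {E : Type*} [NormedAddCommGroup E] [NormedSpace ℝ E]

lemma continuous_ofReal_sq_norm_iteratedFDeriv {u : E → F} {n : WithTop ℕ∞} {j : ℕ}
    (hu : ContDiff ℝ n u) (hj : j ≤ n) :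
    Continuous fun y => ENNReal.ofReal (‖iteratedFDeriv ℝ j u y‖ ^ 2) :=
  ENNReal.continuous_ofReal.comp ((hu.continuous_iteratedFDeriv hj).norm.pow 2)

lemma sq_norm_iteratedFDeriv_le_lintegral [CompleteSpace F] {u : E → F} {j : ℕ}
    (hu : ContDiff ℝ (j + 1) u) {e : E} (he : ‖e‖ ≤ 1) (y : E) :
    ENNReal.ofReal (‖iteratedFDeriv ℝ j u y‖ ^ 2) ≤
      2 * ∫⁻ t in Icc (0:ℝ) 1, (ENNReal.ofReal (‖iteratedFDeriv ℝ j u (y + t • e)‖ ^ 2) +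
        ENNReal.ofReal (‖iteratedFDeriv ℝ (j + 1) u (y + t • e)‖ ^ 2)) := by
  have hDj : ContDiff ℝ 1 (iteratedFDeriv ℝ j u) :=
    hu.iteratedFDeriv_right (by norm_cast; omega)
  have hline : ContDiff ℝ 1 fun t : ℝ => y + t • e := by fun_prop
  have hderiv : ∀ t, ‖deriv (fun t : ℝ => iteratedFDeriv ℝ j u (y + t • e)) t‖ ≤
      ‖iteratedFDeriv ℝ (j + 1) u (y + t • e)‖ := by
    intro t
    have hline_deriv : HasDerivAt (fun s : ℝ => y + s • e) e t := by
      simpa using ((hasDerivAt_id t).smul_const e).const_add y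
    have h := ((hDj.differentiable one_ne_zero _).hasFDerivAt.comp_hasDerivAt t
      hline_deriv).deriv
    rw [Function.comp_def] at h
    rw [h, ← norm_fderiv_iteratedFDeriv]
    exact (ContinuousLinearMap.le_opNorm _ _).trans (mul_le_of_le_one_right (norm_nonneg _) he)
  have h := ofReal_sq_norm_le_two_mul_lintegral_Icc (hDj.comp hline)
  simp only [Function.comp_def, zero_smul, add_zero] at h
  refine h.trans ?_
  gcongr with t
  exact hderiv t

noncomputable def jetSqNorm (u : E → F) (m : ℕ) (y : E) : ENNReal :=
  ∑ j ∈ Finset.range (m + 1), ENNReal.ofReal (‖iteratedFDeriv ℝ j u y‖ ^ 2)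

lemma continuous_jetSqNorm {u : E → F} {m : ℕ} (hu : ContDiff ℝ m u) :
    Continuous (jetSqNorm u m) :=
  continuous_finsetSum _ fun j hj => continuous_ofReal_sq_norm_iteratedFDeriv hu
    (by exact_mod_cast Finset.mem_range_succ_iff.mp hj)

lemma jetSqNorm_le_four_mul_lintegral [CompleteSpace F] {u : E → F} {m : ℕ}
    (hu : ContDiff ℝ (m + 1) u) {e : E} (he : ‖e‖ ≤ 1) (y : E) :
    jetSqNorm u m y ≤ 4 * ∫⁻ t in Icc (0:ℝ) 1, jetSqNorm u (m + 1) (y + t • e) := by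
  set T : ℕ → ℝ → ENNReal := fun j t => ENNReal.ofReal (‖iteratedFDeriv ℝ j u (y + t • e)‖ ^ 2)
  have hT : ∀ j ≤ m + 1, Measurable (T j) := fun j hj =>
    ((continuous_ofReal_sq_norm_iteratedFDeriv hu (by exact_mod_cast hj)).comp
      (by fun_prop)).measurable
  have hpair : ∀ t, ∑ j ∈ Finset.range (m + 1), (T j t + T (j + 1) t) ≤
      2 * jetSqNorm u (m + 1) (y + t • e) := by
    intro t
    rw [Finset.sum_add_distrib, two_mul]
    gcongr
    · exact Finset.sum_le_sum_of_subset (Finset.range_subset_range.mpr (by omega))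
    · rw [jetSqNorm, Finset.sum_range_succ' _ (m + 1)]
      exact le_self_add
  calc jetSqNorm u m y
      ≤ ∑ j ∈ Finset.range (m + 1), 2 * ∫⁻ t in Icc (0:ℝ) 1, (T j t + T (j + 1) t) :=
        Finset.sum_le_sum fun j hj => sq_norm_iteratedFDeriv_le_lintegral
          (hu.of_le (by exact_mod_cast (by simpa using Finset.mem_range_succ_iff.mp hj))) he y
    _ = 2 * ∫⁻ t in Icc (0:ℝ) 1, ∑ j ∈ Finset.range (m + 1), (T j t + T (j + 1) t) := by
        rw [← Finset.mul_sum, lintegral_finsetSum']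
        intro j hj
        have := Finset.mem_range_succ_iff.mp hj
        exact ((hT j (by omega)).add (hT (j + 1) (by omega))).aemeasurable
    _ ≤ 2 * ∫⁻ t in Icc (0:ℝ) 1, 2 * jetSqNorm u (m + 1) (y + t • e) := by
        gcongr with t; exact hpair t
    _ = 4 * ∫⁻ t in Icc (0:ℝ) 1, jetSqNorm u (m + 1) (y + t • e) := by
        rw [lintegral_const_mul' _ _ (by simp), ← mul_assoc]; norm_num

lemma lintegral_pi_fin_succ {α : Type*} [MeasurableSpace α] (μ : Measure α) [SigmaFinite μ]
    {n : ℕ} {f : (Fin (n + 1) → α) → ENNReal} (hf : Measurable f) :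
    ∫⁻ t, f t ∂Measure.pi (fun _ => μ) =
      ∫⁻ s, ∫⁻ t, f (Fin.cons s t) ∂Measure.pi (fun _ => μ) ∂μ := by
  have h := (measurePreserving_piFinSuccAbove (fun _ : Fin (n + 1) => μ) 0).symm
  rw [← h.lintegral_comp_emb (MeasurableEquiv.measurableEmbedding _)]
  refine (lintegral_prod (μ := μ) (ν := Measure.pi fun _ : Fin n => μ) _
    (hf.comp (MeasurableEquiv.piFinSuccAbove _ 0).symm.measurable).aemeasurable).trans ?_
  simp only [MeasurableEquiv.piFinSuccAbove_symm_apply, Fin.insertNthEquiv_zero]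
  rfl

lemma jetSqNorm_le_lintegral_pi [CompleteSpace F] (n : ℕ) :
    ∀ {m : ℕ} {u : E → F}, ContDiff ℝ (m + n : ℕ) u → ∀ {e : Fin n → E}, (∀ i, ‖e i‖ ≤ 1) →
      ∀ x, jetSqNorm u m x ≤ 4 ^ n * ∫⁻ t, jetSqNorm u (m + n) (x + ∑ i, t i • e i)
        ∂Measure.pi fun _ => volume.restrict (Icc (0:ℝ) 1) := by
  induction n with
  | zero =>
    intro m u _ e _ x
    simp
  | succ n ih =>
    intro m u hu e he x
    have hu' : ContDiff ℝ (m + 1 + n : ℕ) u := by rwa [Nat.add_right_comm, add_assoc]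
    calc jetSqNorm u m x
        ≤ 4 * ∫⁻ s in Icc (0:ℝ) 1, jetSqNorm u (m + 1) (x + s • e 0) :=
          jetSqNorm_le_four_mul_lintegral (hu.of_le (by norm_cast; omega)) (he 0) x
      _ ≤ 4 * ∫⁻ s in Icc (0:ℝ) 1, 4 ^ n * ∫⁻ t, jetSqNorm u (m + 1 + n)
            (x + s • e 0 + ∑ i : Fin n, t i • e i.succ)
            ∂Measure.pi fun _ => volume.restrict (Icc (0:ℝ) 1) := by
          gcongr with s
          exact ih hu' (fun i => he i.succ) _
      _ = 4 ^ (n + 1) * ∫⁻ t, jetSqNorm u (m + (n + 1)) (x + ∑ i, t i • e i)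
            ∂Measure.pi fun _ => volume.restrict (Icc (0:ℝ) 1) := by
          have hmeas : Measurable fun t : Fin (n + 1) → ℝ =>
              jetSqNorm u (m + (n + 1)) (x + ∑ i, t i • e i) :=
            ((continuous_jetSqNorm hu).comp (by fun_prop)).measurable
          rw [lintegral_pi_fin_succ _ hmeas, lintegral_const_mul' _ _ (by simp), ← mul_assoc,
            ← pow_succ']
          simp only [Fin.sum_univ_succ, Fin.cons_zero, Fin.cons_succ, add_assoc,
            Nat.add_right_comm m 1 n]

lemma sum_smul_single_eq_toLp {n : ℕ} (t : Fin n → ℝ) :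
    ∑ i, t i • EuclideanSpace.single i (1 : ℝ) = WithLp.toLp 2 t := by
  ext j; simp [Pi.single_apply]

theorem ofReal_sq_norm_le_lintegral_unitCube [CompleteSpace F] {n : ℕ}
    {u : EuclideanSpace ℝ (Fin n) → F} (hu : ContDiff ℝ n u) (x : EuclideanSpace ℝ (Fin n)) :
    ENNReal.ofReal (‖u x‖ ^ 2) ≤
      4 ^ n * ∫⁻ t in Icc (0 : Fin n → ℝ) 1, jetSqNorm u n (x + WithLp.toLp 2 t) := by
  have h := jetSqNorm_le_lintegral_pi n (m := 0) (u := u) (by simpa using hu)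
    (e := fun i => EuclideanSpace.single i 1) (by simp) x
  rw [← Measure.restrict_pi_pi, ← volume_pi, pi_univ_Icc] at h
  simp only [jetSqNorm, zero_add, Finset.range_one, Finset.sum_singleton,
    norm_iteratedFDeriv_zero, sum_smul_single_eq_toLp] at h
  exact h

lemma norm_toLp_le_sqrt_of_mem_Icc {n : ℕ} {t : Fin n → ℝ} (ht : t ∈ Icc 0 1) :
    ‖WithLp.toLp 2 t‖ ≤ √n := by
  rw [EuclideanSpace.norm_eq]
  gcongr
  calc ∑ i, ‖t i‖ ^ 2 ≤ ∑ _i : Fin n, (1 : ℝ) := by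
        gcongr with i
        rw [Real.norm_of_nonneg (ht.1 i)]
        exact pow_le_one₀ (ht.1 i) (ht.2 i)
    _ = n := by simp

theorem mul_ofReal_sq_norm_le_mul_lintegral [CompleteSpace F] {n : ℕ}
    {u : EuclideanSpace ℝ (Fin n) → F} (hu : ContDiff ℝ n u)
    {ω : EuclideanSpace ℝ (Fin n) → ENNReal} {c : ENNReal} (hc : c ≠ ⊤)
    {x : EuclideanSpace ℝ (Fin n)} (hω : ∀ y, dist y x ≤ √n → ω x ≤ c * ω y) :
    ω x * ENNReal.ofReal (‖u x‖ ^ 2) ≤ 4 ^ n * c * ∫⁻ y, ω y * jetSqNorm u n y := by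
  set g := fun y => ω y * jetSqNorm u n y
  have hshift : MeasurePreserving (fun t : Fin n → ℝ => x + WithLp.toLp 2 t) :=
    (measurePreserving_add_left volume x).comp (PiLp.volume_preserving_toLp (Fin n))
  have hemb : MeasurableEmbedding (fun t : Fin n → ℝ => x + WithLp.toLp 2 t) :=
    ((MeasurableEquiv.toLp 2 (Fin n → ℝ)).trans (MeasurableEquiv.addLeft x)).measurableEmbedding
  calc ω x * ENNReal.ofReal (‖u x‖ ^ 2)
      ≤ ω x * (4 ^ n * ∫⁻ t in Icc (0 : Fin n → ℝ) 1, jetSqNorm u n (x + WithLp.toLp 2 t)) := by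
        gcongr; exact ofReal_sq_norm_le_lintegral_unitCube hu x
    _ ≤ 4 ^ n * ∫⁻ t in Icc (0 : Fin n → ℝ) 1, ω x * jetSqNorm u n (x + WithLp.toLp 2 t) := by
        rw [mul_left_comm]; gcongr; exact lintegral_const_mul_le _ _
    _ ≤ 4 ^ n * ∫⁻ t in Icc (0 : Fin n → ℝ) 1, c * g (x + WithLp.toLp 2 t) := by
        gcongr 1
        refine setLIntegral_mono' measurableSet_Icc fun t ht => ?_
        rw [← mul_assoc]
        gcongr
        exact hω _ (by simpa using norm_toLp_le_sqrt_of_mem_Icc ht)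
    _ ≤ 4 ^ n * ∫⁻ t, c * g (x + WithLp.toLp 2 t) := by
        gcongr 1; exact setLIntegral_le_lintegral _ _
    _ = 4 ^ n * c * ∫⁻ y, g y := by
        rw [hshift.lintegral_comp_emb hemb (fun y => c * g y), lintegral_const_mul' _ _ hc,
          mul_assoc]

end Sobolev

lemma le_mul_sqrt_toReal_of_ofReal_sq_le {a c : ℝ} {G : ENNReal} (ha : 0 ≤ a) (hc : 0 ≤ c)
    (hG : G ≠ ⊤) (h : ENNReal.ofReal (a ^ 2) ≤ ENNReal.ofReal (c ^ 2) * G) :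
    a ≤ c * √G.toReal := by
  have h' := ENNReal.toReal_mono (ENNReal.mul_ne_top ENNReal.ofReal_ne_top hG) h
  rw [ENNReal.toReal_mul, ENNReal.toReal_ofReal (sq_nonneg a),
    ENNReal.toReal_ofReal (sq_nonneg c)] at h'
  rw [← Real.sqrt_sq hc, ← Real.sqrt_mul (sq_nonneg c), ← Real.sqrt_sq ha]
  exact Real.sqrt_le_sqrt h'

lemma exp_mul_rpow_mul_rpow_le {a b z γ s : ℝ} (ha : 0 ≤ a) (hb : 1 ≤ b) (hab : a ≤ b + 2)
    (hz : 0 ≤ z) (hγ0 : 0 ≤ γ) (hγ1 : γ ≤ 1) (hs : 0 ≤ s) :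
    Real.exp (z * a ^ γ) * a ^ s ≤ Real.exp (2 * z) * 3 ^ s * (Real.exp (z * b ^ γ) * b ^ s) := by
  have hγ : a ^ γ ≤ b ^ γ + 2 :=
    calc a ^ γ ≤ (b + 2) ^ γ := Real.rpow_le_rpow ha hab hγ0
      _ ≤ b ^ γ + 2 ^ γ := Real.rpow_add_le_add_rpow (by linarith) zero_le_two hγ0 hγ1
      _ ≤ b ^ γ + 2 := by
        gcongr; simpa using Real.rpow_le_rpow_of_exponent_le one_le_two hγ1
  have hexp : Real.exp (z * a ^ γ) ≤ Real.exp (2 * z) * Real.exp (z * b ^ γ) := by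
    rw [← Real.exp_add]; gcongr; nlinarith
  have hpow : a ^ s ≤ 3 ^ s * b ^ s := by
    rw [← Real.mul_rpow zero_le_three (by linarith)]
    exact Real.rpow_le_rpow ha (by linarith) hs
  calc Real.exp (z * a ^ γ) * a ^ s
      ≤ (Real.exp (2 * z) * Real.exp (z * b ^ γ)) * (3 ^ s * b ^ s) := by gcongr
    _ = _ := by ring

lemma sqrt_add_sq_le_sqrt_add_sq_add_abs_sub {a r s : ℝ} (ha : 0 ≤ a) :
    √(a + r ^ 2) ≤ √(a + s ^ 2) + |r - s| := by
  have hs : |s| ≤ √(a + s ^ 2) := Real.abs_le_sqrt (by linarith [sq_nonneg s])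
  have hq := Real.sq_sqrt (show 0 ≤ a + s ^ 2 by positivity)
  have hcross : s * (r - s) ≤ |s| * |r - s| := (le_abs_self _).trans (abs_mul _ _).le
  have hd := mul_le_mul_of_nonneg_right hs (abs_nonneg (r - s))
  rw [Real.sqrt_le_left (by positivity)]
  nlinarith [sq_abs (r - s)]

section JapaneseBracket

variable (k : Fin 3 → ℤ)

lemma one_le_jbe (η : EuclideanSpace ℝ (Fin 3)) : 1 ≤ jbe k η := by
  rw [jbe, Real.one_le_sqrt]
  have : 0 ≤ ∑ i, ((k i : ℝ)) ^ 2 := by positivity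
  nlinarith [sq_nonneg ‖η‖]

lemma measurable_jbe : Measurable (jbe k) := by
  unfold jbe; fun_prop

lemma jbe_le_jbe_add_dist (η y : EuclideanSpace ℝ (Fin 3)) :
    jbe k η ≤ jbe k y + dist η y := by
  calc jbe k η ≤ jbe k y + |‖η‖ - ‖y‖| :=
        sqrt_add_sq_le_sqrt_add_sq_add_abs_sub (by positivity)
    _ ≤ jbe k y + dist η y := by
        gcongr; rw [dist_eq_norm]; exact abs_norm_sub_norm_le η y

end JapaneseBracket

lemma one_le_knorm {k : Fin 3 → ℤ} (hk : k ≠ 0) : 1 ≤ knorm k := by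
  obtain ⟨i, hi⟩ := Function.ne_iff.mp hk
  have hki : (1 : ℝ) ≤ (k i : ℝ) ^ 2 := by
    have : (1 : ℤ) ≤ k i ^ 2 := by nlinarith [Int.one_le_abs hi, sq_abs (k i)]
    exact_mod_cast this
  rw [knorm, Real.one_le_sqrt]
  exact hki.trans (Finset.single_le_sum (fun j _ => sq_nonneg ((k j : ℝ))) (Finset.mem_univ i))

noncomputable def jbeWeight (z γ σ : ℝ) (k : Fin 3 → ℤ) (η : EuclideanSpace ℝ (Fin 3)) : ℝ :=
  Real.exp (z * jbe k η ^ γ) * jbe k η ^ σ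

section Weight

variable {F : Type*} [NormedAddCommGroup F] [NormedSpace ℝ F] {z γ σ : ℝ} {k : Fin 3 → ℤ}

lemma jbeWeight_nonneg (η : EuclideanSpace ℝ (Fin 3)) : 0 ≤ jbeWeight z γ σ k η :=
  mul_nonneg (Real.exp_pos _).le (Real.rpow_nonneg (zero_le_one.trans (one_le_jbe k η)) _)

lemma jbeWeight_sq (η : EuclideanSpace ℝ (Fin 3)) :
    jbeWeight z γ σ k η ^ 2 = Real.exp (2 * z * jbe k η ^ γ) * jbe k η ^ (2 * σ) := by
  rw [jbeWeight, mul_pow, ← Real.rpow_natCast (jbe k η ^ σ),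
    ← Real.rpow_mul (zero_le_one.trans (one_le_jbe k η)), ← Real.exp_nat_mul]
  push_cast
  ring_nf

lemma ofReal_sq_jbeWeight_le {c : ℝ} (hz : 0 ≤ z) (hγ0 : 0 ≤ γ) (hγ1 : γ ≤ 1) (hσ : 0 ≤ σ)
    (hc : Real.exp (2 * z) * 3 ^ σ ≤ c) {η y : EuclideanSpace ℝ (Fin 3)} (hy : dist y η ≤ √3) :
    ENNReal.ofReal (jbeWeight z γ σ k η ^ 2) ≤
      ENNReal.ofReal (c ^ 2) * ENNReal.ofReal (jbeWeight z γ σ k y ^ 2) := by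
  have hdist : dist η y ≤ 2 := by
    rw [dist_comm]; exact hy.trans (by rw [Real.sqrt_le_left] <;> norm_num)
  have h := exp_mul_rpow_mul_rpow_le (zero_le_one.trans (one_le_jbe k η)) (one_le_jbe k y)
    ((jbe_le_jbe_add_dist k η y).trans (by linarith)) hz hγ0 hγ1 hσ
  rw [← ENNReal.ofReal_mul (sq_nonneg _), ← mul_pow]
  exact ENNReal.ofReal_le_ofReal (pow_le_pow_left₀ (jbeWeight_nonneg η)
    (h.trans (mul_le_mul_of_nonneg_right hc (jbeWeight_nonneg y))) 2)

lemma lintegral_ofReal_sq_jbeWeight_mul_jetSqNorm {u : EuclideanSpace ℝ (Fin 3) → F}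
    (hu : ContDiff ℝ 3 u) :
    ∫⁻ y, ENNReal.ofReal (jbeWeight z γ σ k y ^ 2) * jetSqNorm u 3 y =
      ∑ j ∈ Finset.range 4, ∫⁻ y, ENNReal.ofReal
        (Real.exp (2 * z * jbe k y ^ γ) * ‖iteratedFDeriv ℝ j u y‖ ^ 2 * jbe k y ^ (2 * σ)) := by
  have hjbe := measurable_jbe k
  rw [← lintegral_finsetSum']
  · refine lintegral_congr fun y => ?_
    rw [jetSqNorm, Finset.mul_sum]
    refine Finset.sum_congr rfl fun j _ => ?_
    rw [← ENNReal.ofReal_mul (sq_nonneg _), jbeWeight_sq]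
    ring_nf
  · intro j hj
    have hD : Measurable fun y => ‖iteratedFDeriv ℝ j u y‖ ^ 2 :=
      (hu.continuous_iteratedFDeriv
        (by exact_mod_cast Finset.mem_range_succ_iff.mp hj)).norm.pow 2 |>.measurable
    exact (ENNReal.measurable_ofReal.comp
      (((by fun_prop : Measurable fun y => Real.exp (2 * z * jbe k y ^ γ)).mul hD).mul
        (by fun_prop))).aemeasurable

lemma jbeWeight_mul_norm_le [CompleteSpace F] {c : ℝ} (hz : 0 ≤ z) (hγ0 : 0 ≤ γ) (hγ1 : γ ≤ 1)
    (hσ : 0 ≤ σ) (hc0 : 0 ≤ c) (hc : Real.exp (2 * z) * 3 ^ σ ≤ c)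
    {u : EuclideanSpace ℝ (Fin 3) → F} (hu : ContDiff ℝ 3 u) {G : ENNReal} (hGtop : G ≠ ⊤)
    (hG : ∑ j ∈ Finset.range 4, ∫⁻ y, ENNReal.ofReal
      (Real.exp (2 * z * jbe k y ^ γ) * ‖iteratedFDeriv ℝ j u y‖ ^ 2 * jbe k y ^ (2 * σ)) ≤ G)
    (η : EuclideanSpace ℝ (Fin 3)) :
    jbeWeight z γ σ k η * ‖u η‖ ≤ 8 * c * √G.toReal := by
  refine le_mul_sqrt_toReal_of_ofReal_sq_le
    (mul_nonneg (jbeWeight_nonneg η) (norm_nonneg _)) (by positivity) hGtop ?_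
  calc ENNReal.ofReal ((jbeWeight z γ σ k η * ‖u η‖) ^ 2)
      = ENNReal.ofReal (jbeWeight z γ σ k η ^ 2) * ENNReal.ofReal (‖u η‖ ^ 2) := by
        rw [mul_pow, ENNReal.ofReal_mul (sq_nonneg _)]
    _ ≤ 4 ^ 3 * ENNReal.ofReal (c ^ 2) *
          ∫⁻ y, ENNReal.ofReal (jbeWeight z γ σ k y ^ 2) * jetSqNorm u 3 y :=
        mul_ofReal_sq_norm_le_mul_lintegral hu ENNReal.ofReal_ne_top fun y hy =>
          ofReal_sq_jbeWeight_le hz hγ0 hγ1 hσ hc (by simpa using hy)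
    _ ≤ 4 ^ 3 * ENNReal.ofReal (c ^ 2) * G := by
        rw [lintegral_ofReal_sq_jbeWeight_mul_jetSqNorm hu]
        gcongr
    _ = ENNReal.ofReal ((8 * c) ^ 2) * G := by
        rw [mul_pow, ENNReal.ofReal_mul (by norm_num)]
        norm_num

end Weight

theorem F_le_sqrt_G_general {γ σ α lam₁ : ℝ} (hγ0 : 0 < γ) (hγ1 : γ ≤ 1) (hσ : 0 < σ)
    (hα0 : 0 ≤ α) :
    ∃ C : ℝ, 0 < C ∧ ∀ z : ℝ, 0 ≤ z → z ≤ lam₁ →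
      ∀ w : (Fin 3 → ℤ) → EuclideanSpace ℝ (Fin 3) → ℂ,
        (∀ k : Fin 3 → ℤ, ContDiff ℝ 3 (w k)) →
        ∀ G : ENNReal,
          (∑' k : Fin 3 → ℤ, ∑ j ∈ Finset.range 4,
              ∫⁻ η : EuclideanSpace ℝ (Fin 3),
                ENNReal.ofReal (Real.exp (2 * z * jbe k η ^ γ) *
                  ‖iteratedFDeriv ℝ j (w k) η‖ ^ 2 * jbe k η ^ (2 * σ))) = G →
          G ≠ ⊤ →
          (∀ (k : Fin 3 → ℤ) (η : EuclideanSpace ℝ (Fin 3)),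
              Real.exp (z * jbe k η ^ γ) * jbe k η ^ σ * ‖w k η‖ ≤
                C * Real.sqrt G.toReal) ∧
          (∀ t : ℝ, 0 ≤ t → ∀ k : Fin 3 → ℤ, k ≠ 0 →
              Real.exp (z * jbe k (ktv k t) ^ γ) * jbe k (ktv k t) ^ σ *
                  knorm k ^ (-α) * ‖w k (ktv k t)‖ ≤
                C * Real.sqrt G.toReal) := by
  obtain ⟨c, hc0, hc⟩ : ∃ c : ℝ, 0 < c ∧ ∀ z ≤ lam₁, Real.exp (2 * z) * 3 ^ σ ≤ c :=
    ⟨Real.exp (2 * lam₁) * 3 ^ σ, by positivity, fun z hz => by gcongr⟩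
  refine ⟨8 * c, by positivity, fun z hz0 hz1 w hw G hG hGtop => ?_⟩
  have hpoint : ∀ k η, jbeWeight z γ σ k η * ‖w k η‖ ≤ 8 * c * √G.toReal := fun k =>
    jbeWeight_mul_norm_le hz0 hγ0.le hγ1 hσ.le hc0.le (hc z hz1) (hw k) hGtop
      (hG ▸ ENNReal.le_tsum k)
  refine ⟨hpoint, fun t _ k hk => ?_⟩
  calc _ = jbeWeight z γ σ k (ktv k t) * ‖w k (ktv k t)‖ * knorm k ^ (-α) := by
        rw [jbeWeight]; ring
    _ ≤ jbeWeight z γ σ k (ktv k t) * ‖w k (ktv k t)‖ :=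
        mul_le_of_le_one_right (mul_nonneg (jbeWeight_nonneg _) (norm_nonneg _))
          (Real.rpow_le_one_of_one_le_of_nonpos (one_le_knorm hk) (by linarith))
    _ ≤ _ := hpoint k _

/-- The comparison `F[ρ](t,z) ≤ C·G[g(t)]^{1/2}(z)` between the generator functions,
at the level of the Fourier coefficients `w_k(η) = ĝ_{k,η}(t)`. -/
theorem F_le_sqrt_G {γ σ α lam₁ : ℝ} (hγ0 : 0 < γ) (hγ1 : γ ≤ 1) (hσ : 0 < σ)
    (hα0 : 0 ≤ α) (hα : α < 1 / 2) (hlam : 0 < lam₁) :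
    ∃ C : ℝ, 0 < C ∧ ∀ z : ℝ, 0 ≤ z → z ≤ lam₁ →
      ∀ w : (Fin 3 → ℤ) → EuclideanSpace ℝ (Fin 3) → ℂ,
        (∀ k : Fin 3 → ℤ, ContDiff ℝ 3 (w k)) →
        ∀ G : ENNReal,
          (∑' k : Fin 3 → ℤ, ∑ j ∈ Finset.range 4,
              ∫⁻ η : EuclideanSpace ℝ (Fin 3),
                ENNReal.ofReal (Real.exp (2 * z * jbe k η ^ γ) *
                  ‖iteratedFDeriv ℝ j (w k) η‖ ^ 2 * jbe k η ^ (2 * σ))) = G →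
          G ≠ ⊤ →
          (∀ (k : Fin 3 → ℤ) (η : EuclideanSpace ℝ (Fin 3)),
              Real.exp (z * jbe k η ^ γ) * jbe k η ^ σ * ‖w k η‖ ≤
                C * Real.sqrt G.toReal) ∧
          (∀ t : ℝ, 0 ≤ t → ∀ k : Fin 3 → ℤ, k ≠ 0 →
              Real.exp (z * jbe k (ktv k t) ^ γ) * jbe k (ktv k t) ^ σ *
                  knorm k ^ (-α) * ‖w k (ktv k t)‖ ≤
                C * Real.sqrt G.toReal) :=
  F_le_sqrt_G_general hγ0 hγ1 hσ hα0
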